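/- arXiv:1607.08837 — 2 statements merged into one kernel-verified Lean document; each statement's English description precedes it below -/
import Mathlib

section
/- Let p be a prime with p ≡ 3 (mod 4), and for a, b ∈ Z_p define N(a,b) = |{(u,v) ∈ Q × Q : a + u = b - v}|, where Q is the set of nonzero squares of Z_p. Then N(a,b) = (p-3)/4 if b - a ∈ Q, N(a,b) = (p+1)/4 if a ≠ b and b - a ∉ Q, and N(a,b) = 0 if a = b. -/
/-!
With `χ` the quadratic character and `c = b - a ≠ 0`, the product `(1 + χ u) * (1 + χ (c - u))`
is `4` when `u` and `c - u` are both nonzero squares, `0` at any other `u ∉ {0, c}`, and `1 + χ c`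
at `u = 0` and at `u = c`. Summing over `u`, the substitution `u = c x` turns the cross term into
the Jacobi sum `J(χ, χ) = -χ(-1)`, so `4 N = q - 2 - χ(-1) - 2 χ(c)`. For `p ≡ 3 (mod 4)` we have
`χ(-1) = -1`, which also means `u` and `-u` are never both squares, settling `a = b`.
-/

open Finset

namespace FiniteField

variable {F : Type*} [Field F] [Fintype F] [DecidableEq F]

local notation "χ" => quadraticChar F

theorem quadraticChar_eq_one_iff_exists_sq (u : F) :
    χ u = 1 ↔ ∃ x : F, x ≠ 0 ∧ u = x ^ 2 := by
  constructor
  · intro hu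
    have hu0 : u ≠ 0 := by rintro rfl; simp at hu
    obtain ⟨r, rfl⟩ := (quadraticChar_one_iff_isSquare hu0).mp hu
    exact ⟨r, by rintro rfl; simp at hu0, (sq r).symm⟩
  · rintro ⟨x, hx, rfl⟩
    exact quadraticChar_sq_one' hx

theorem sum_quadraticChar_mul_quadraticChar_sub (hF : ringChar F ≠ 2) {c : F} (hc : c ≠ 0) :
    ∑ u : F, χ u * χ (c - u) = -χ (-1) := by
  have hχc : χ c * χ c = 1 := by rw [← map_mul, ← sq]; exact quadraticChar_sq_one' hc
  calc ∑ u : F, χ u * χ (c - u)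
      = ∑ x : F, χ (c * x) * χ (c - c * x) :=
        (Fintype.sum_equiv (Equiv.mulLeft₀ c hc) _ _ fun _ ↦ rfl).symm
    _ = ∑ x : F, χ x * χ (1 - x) := by
        refine Fintype.sum_congr _ _ fun x ↦ ?_
        rw [← mul_one_sub, map_mul, map_mul]
        linear_combination (χ x * χ (1 - x)) * hχc
    _ = -χ (-1) := by
        have := jacobiSum_nontrivial_inv (quadraticChar_ne_one hF)
        rwa [(quadraticChar_isQuadratic F).inv] at this

theorem one_add_quadraticChar_mul_one_add_quadraticChar_sub {c : F} (hc : c ≠ 0) (u : F) :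
    (1 + χ u) * (1 + χ (c - u)) =
      (if χ u = 1 ∧ χ (c - u) = 1 then 4 else 0) +
        (if u = 0 then 1 + χ c else 0) +
        (if u = c then 1 + χ c else 0) := by
  by_cases hu : u = 0
  · simp [hu, hc.symm]
  by_cases huc : u = c
  · simp [huc, hc]
  have hcu : c - u ≠ 0 := sub_ne_zero.mpr (Ne.symm huc)
  rcases quadraticChar_dichotomy hu with h1 | h1 <;>
    rcases quadraticChar_dichotomy hcu with h2 | h2 <;> simp [hu, huc, h1, h2]

theorem four_mul_card_filter_quadraticChar_eq_one (hF : ringChar F ≠ 2) {c : F} (hc : c ≠ 0) :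
    4 * (#{u : F | χ u = 1 ∧ χ (c - u) = 1} : ℤ) =
      Fintype.card F - 2 - χ (-1) - 2 * χ c := by
  have hsum : ∑ u : F, (1 + χ u) * (1 + χ (c - u)) = Fintype.card F - χ (-1) := by
    have hχ : ∑ u : F, χ u = 0 := MulChar.sum_eq_zero_of_ne_one (quadraticChar_ne_one hF)
    have hχsub : ∑ u : F, χ (c - u) = 0 :=
      (Fintype.sum_equiv (Equiv.subLeft c) _ _ fun _ ↦ rfl).trans hχ
    simp only [add_mul, one_mul, mul_add, mul_one, sum_add_distrib, hχ, hχsub,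
      sum_quadraticChar_mul_quadraticChar_sub hF hc, sum_const, card_univ, nsmul_one]
    ring
  simp only [one_add_quadraticChar_mul_one_add_quadraticChar_sub hc, sum_add_distrib,
    sum_ite_eq', mem_univ, if_true, ← sum_filter, sum_const, nsmul_eq_mul] at hsum
  linear_combination hsum

theorem not_quadraticChar_eq_one_and_neg (h : χ (-1) = -1) (u : F) :
    ¬(χ u = 1 ∧ χ (-u) = 1) := by
  rintro ⟨h1, h2⟩
  rw [neg_eq_neg_one_mul, map_mul, h, h1] at h2
  norm_num at h2

theorem natCard_nonzero_sq_pairs_eq_card_filter (a b : F) :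
    Nat.card {uv : F × F // (∃ x : F, x ≠ 0 ∧ uv.1 = x ^ 2) ∧
        (∃ y : F, y ≠ 0 ∧ uv.2 = y ^ 2) ∧ a + uv.1 = b - uv.2} =
      #{u : F | χ u = 1 ∧ χ (b - a - u) = 1} := by
  simp only [← quadraticChar_eq_one_iff_exists_sq]
  rw [← Fintype.card_subtype, ← Nat.card_eq_fintype_card]
  refine Nat.card_congr
    { toFun := fun uv ↦ ⟨uv.1.1, uv.2.1, ?_⟩
      invFun := fun u ↦ ⟨(u.1, b - a - u.1), u.2.1, u.2.2, by ring⟩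
      left_inv := fun uv ↦ ?_
      right_inv := fun _ ↦ rfl }
  all_goals obtain ⟨⟨u, v⟩, hu, hv, huv⟩ := uv
  · rwa [show b - a - u = v by linear_combination -huv]
  · obtain rfl : v = b - a - u := by linear_combination huv
    rfl

end FiniteField

open FiniteField in
/-- for `p ≡ 3 (mod 4)` prime, the count `N(a,b)` of pairs `(u,v)` of
nonzero squares with `a + u = b - v` is `(p-3)/4`, `(p+1)/4` or `0` according to cases. -/
theorem count_pairs_nonzero_squares_three_mod_four (p : ℕ) (hp : p.Prime) (h : p % 4 = 3)
    (a b : ZMod p) :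
    ((∃ x : ZMod p, x ≠ 0 ∧ b - a = x ^ 2) →
      Nat.card {uv : ZMod p × ZMod p // (∃ x : ZMod p, x ≠ 0 ∧ uv.1 = x ^ 2) ∧
        (∃ y : ZMod p, y ≠ 0 ∧ uv.2 = y ^ 2) ∧ a + uv.1 = b - uv.2} = (p - 3) / 4) ∧
    ((a ≠ b ∧ ¬ (∃ x : ZMod p, x ≠ 0 ∧ b - a = x ^ 2)) →
      Nat.card {uv : ZMod p × ZMod p // (∃ x : ZMod p, x ≠ 0 ∧ uv.1 = x ^ 2) ∧
        (∃ y : ZMod p, y ≠ 0 ∧ uv.2 = y ^ 2) ∧ a + uv.1 = b - uv.2} = (p + 1) / 4) ∧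
    (a = b →
      Nat.card {uv : ZMod p × ZMod p // (∃ x : ZMod p, x ≠ 0 ∧ uv.1 = x ^ 2) ∧
        (∃ y : ZMod p, y ≠ 0 ∧ uv.2 = y ^ 2) ∧ a + uv.1 = b - uv.2} = 0) := by
  have : Fact p.Prime := ⟨hp⟩
  have hchar : ringChar (ZMod p) ≠ 2 := by rw [ZMod.ringChar_zmod_n]; omega
  have hneg : quadraticChar (ZMod p) (-1) = -1 := by
    rw [quadraticChar_neg_one hchar, ZMod.card, ZMod.χ₄_nat_three_mod_four h]
  have hcount := four_mul_card_filter_quadraticChar_eq_one hchar (c := b - a)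
  rw [ZMod.card, hneg] at hcount
  rw [natCard_nonzero_sq_pairs_eq_card_filter]
  simp only [← quadraticChar_eq_one_iff_exists_sq]
  refine ⟨fun hsq ↦ ?_, fun ⟨hab, hnsq⟩ ↦ ?_, fun hab ↦ ?_⟩
  · have hba : b - a ≠ 0 := by rintro h0; simp [h0] at hsq
    have := hcount hba
    rw [hsq] at this
    omega
  · have hba : b - a ≠ 0 := sub_ne_zero.mpr hab.symm
    have := hcount hba
    rw [(quadraticChar_dichotomy hba).resolve_left hnsq] at this
    omega
  · subst hab
    simpa [card_eq_zero, filter_eq_empty_iff] using not_quadraticChar_eq_one_and_neg hneg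
end

section
/- Let α > 2 and n = 2^α. For c ∈ Z_n and positive integer k, the number of k-tuples (x_1,...,x_k) of units of Z_n with x_1^2 + ... + x_k^2 = c equals 2^{2k + (α-3)(k-1)} if c ≡ k (mod 8), and 0 otherwise. -/
/-!
Squaring is an endomorphism of `(ℤ/2^α)ˣ` whose image lies in the residues `≡ 1 mod 8`, a set
with `2^(α-3)` elements. Since `5` has order `2^(α-2)`, the powers of `25` already fill that set,
so every residue `≡ 1 mod 8` has exactly `4` square roots among the units. Hence the tuples of
units with `∑ xᵢ² = c` are `4^k` times as many as the tuples `(sᵢ)` of residues `≡ 1 mod 8` with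
`∑ sᵢ = c`; those exist only if `c ≡ k mod 8`, and then `s₁, …, s_{k-1}` are free.
-/

open ZMod

theorem Nat.card_pi_subtype_comp_of_card_fiber {ι A B : Type*} [Fintype ι] [Finite A] [Finite B]
    (f : A → B) {m : ℕ} (hf : ∀ b, Nat.card {a // f a = b} = m) (P : (ι → B) → Prop) :
    Nat.card {x : ι → A // P (fun i => f (x i))} = m ^ Fintype.card ι * Nat.card {s // P s} := by
  have := Fintype.ofFinite {s // P s}
  have hfiber (s : ι → B) :
      Nat.card {x : ι → A // (fun i => f (x i)) = s} = m ^ Fintype.card ι := by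
    rw [Nat.card_congr ((Equiv.subtypeEquivRight fun x => funext_iff).trans
      (Equiv.subtypePiEquivPi (p := fun i a => f a = s i))), Nat.card_pi]
    simp [hf]
  rw [← Nat.card_congr (Equiv.sigmaSubtypeFiberEquivSubtype (fun x i => f (x i))
    (p := fun x : ι → A => P fun i => f (x i)) (q := P) fun _ => Iff.rfl), Nat.card_sigma]
  simp [hfiber, mul_comm]

open Finset in
theorem AddMonoidHom.card_fiber_pi_sum_eq {G H : Type*} [AddCommGroup G] [AddCommGroup H]
    [DecidableEq H] (φ : G →+ H) (h : H) (m : ℕ) (c : G) :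
    Nat.card {s : Fin (m + 1) → φ ⁻¹' {h} // ∑ i, (s i : G) = c} =
      if φ c = (m + 1) • h then Nat.card (φ ⁻¹' {h}) ^ m else 0 := by
  have hsum {n : ℕ} (t : Fin n → φ ⁻¹' {h}) : φ (∑ i, (t i : G)) = n • h := by
    have ht i : φ (t i) = h := (t i).2
    simp [ht]
  split_ifs with hc
  · calc _ = Nat.card (Fin m → φ ⁻¹' {h}) := by
          refine Nat.card_congr ⟨fun s i => s.1 i.succ,
            fun t => ⟨Fin.cons ⟨c - ∑ i, (t i : G), by simp [hc, hsum, succ_nsmul]⟩ t,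
              by simp [Fin.sum_univ_succ]⟩, fun s => ?_, fun t => rfl⟩
          refine Subtype.ext <| funext <| Fin.cases (Subtype.ext ?_) fun i => rfl
          simp [← s.2, Fin.sum_univ_succ]
      _ = _ := by simp [Nat.card_fun]
  · have : IsEmpty {s : Fin (m + 1) → φ ⁻¹' {h} // ∑ i, (s i : G) = c} :=
      ⟨fun s => hc (by simpa [← s.2] using hsum s.1)⟩
    exact Nat.card_of_isEmpty

theorem Nat.eight_dvd_two_pow {α : ℕ} (hα : 3 ≤ α) : 8 ∣ 2 ^ α := pow_dvd_pow 2 hα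

theorem Nat.two_pow_div_eight {α : ℕ} (hα : 3 ≤ α) : 2 ^ α / 8 = 2 ^ (α - 3) :=
  Nat.pow_div hα two_pos

namespace ZMod

theorem castHom_sq_of_isUnit {n : ℕ} (h : 8 ∣ n) {x : ZMod n} (hx : IsUnit x) :
    castHom h (ZMod 8) (x ^ 2) = 1 := by
  obtain ⟨u, hu⟩ := hx.map (castHom h (ZMod 8))
  have hsq : ∀ v : (ZMod 8)ˣ, (v : ZMod 8) ^ 2 = 1 := by decide
  rw [map_pow, ← hu, hsq]

theorem card_castHom_fiber {n d : ℕ} [NeZero n] (h : d ∣ n) (y : ZMod d) :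
    Nat.card (castHom h (ZMod d) ⁻¹' {y}) = n / d := by
  have : NeZero d := ⟨fun hd => NeZero.ne n (Nat.eq_zero_of_zero_dvd (hd ▸ h))⟩
  let φ : ZMod n →+ ZMod d := castHom h (ZMod d)
  have hφ : Function.Surjective φ := ringHom_surjective _
  have hker := φ.ker.card_mul_index
  rw [AddSubgroup.index_ker, AddMonoidHom.range_eq_top.mpr hφ, AddSubgroup.card_top,
    Nat.card_zmod, Nat.card_zmod] at hker
  exact (Nat.card_congr (φ.fiberEquivKerOfSurjective hφ y)).trans
    (Nat.div_eq_of_eq_mul_left (Nat.pos_of_neZero d) hker.symm).symm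

theorem card_units_two_pow {α : ℕ} (hα : 1 ≤ α) : Nat.card (ZMod (2 ^ α))ˣ = 2 ^ (α - 1) := by
  rw [Nat.card_eq_fintype_card, card_units_eq_totient, Nat.totient_prime_pow Nat.prime_two hα]
  ring

theorem two_pow_le_card_range_sq_units {α : ℕ} (hα : 3 ≤ α) :
    2 ^ (α - 3) ≤ Nat.card (powMonoidHom 2 : (ZMod (2 ^ α))ˣ →* _).range := by
  let five : (ZMod (2 ^ α))ˣ := unitOfCoprime 5 (Nat.Coprime.pow_right _ (by norm_num))
  have h5 : orderOf five = 2 ^ (α - 2) := by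
    have := orderOf_five (α - 2)
    rw [Nat.sub_add_cancel (by omega)] at this
    rw [← orderOf_units, ← this]
    simp [five]
  calc 2 ^ (α - 3) = orderOf (five ^ 2) := by
        rw [orderOf_pow_of_dvd two_ne_zero (h5 ▸ dvd_pow_self 2 (by omega)), h5,
          show α - 2 = α - 3 + 1 by omega, pow_succ, Nat.mul_div_cancel _ two_pos]
    _ = Nat.card (Subgroup.zpowers (five ^ 2)) := (Nat.card_zpowers _).symm
    _ ≤ _ := Subgroup.card_le_of_le <|
      Subgroup.zpowers_le.mpr <| MonoidHom.mem_range.mpr ⟨five, rfl⟩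

theorem image_val_range_sq_units {α : ℕ} (hα : 3 ≤ α) :
    Units.val '' ((powMonoidHom 2 : (ZMod (2 ^ α))ˣ →* _).range : Set (ZMod (2 ^ α))ˣ) =
      castHom (Nat.eight_dvd_two_pow hα) (ZMod 8) ⁻¹' {1} := by
  refine Set.eq_of_subset_of_ncard_le ?_ ?_ (Set.toFinite _)
  · rintro _ ⟨_, ⟨u, rfl⟩, rfl⟩
    exact castHom_sq_of_isUnit _ u.isUnit
  · rw [← Nat.card_coe_set_eq, ← Nat.card_coe_set_eq, card_castHom_fiber,
      Nat.card_image_of_injective Units.val_injective, Nat.two_pow_div_eight hα]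
    exact two_pow_le_card_range_sq_units hα

theorem card_range_sq_units {α : ℕ} (hα : 3 ≤ α) :
    Nat.card (powMonoidHom 2 : (ZMod (2 ^ α))ˣ →* _).range = 2 ^ (α - 3) := by
  rw [← Nat.two_pow_div_eight hα, ← card_castHom_fiber (Nat.eight_dvd_two_pow hα) 1,
    ← image_val_range_sq_units hα, Nat.card_image_of_injective Units.val_injective]
  rfl

theorem card_ker_sq_units {α : ℕ} (hα : 3 ≤ α) :
    Nat.card (powMonoidHom 2 : (ZMod (2 ^ α))ˣ →* _).ker = 4 := by
  have h := (powMonoidHom 2 : (ZMod (2 ^ α))ˣ →* _).ker.card_mul_index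
  rw [Subgroup.index_ker, card_range_sq_units hα, card_units_two_pow (by omega),
    show α - 1 = 2 + (α - 3) by omega, pow_add] at h
  exact Nat.eq_of_mul_eq_mul_right (by positivity) h

theorem card_units_sq_eq {α : ℕ} (hα : 3 ≤ α) {t : ZMod (2 ^ α)}
    (ht : castHom (Nat.eight_dvd_two_pow hα) (ZMod 8) t = 1) :
    Nat.card {u : (ZMod (2 ^ α))ˣ // (u : ZMod (2 ^ α)) ^ 2 = t} = 4 := by
  have ht' : t ∈ castHom (Nat.eight_dvd_two_pow hα) (ZMod 8) ⁻¹' {1} := ht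
  obtain ⟨_, ⟨g, rfl⟩, rfl⟩ := image_val_range_sq_units hα ▸ ht'
  rw [← card_ker_sq_units hα, ← Nat.card_congr ((powMonoidHom 2).fiberEquivKer g)]
  exact Nat.card_congr (Equiv.subtypeEquivRight fun u => by simp [Units.ext_iff])

end ZMod

/-- number of representations as sums of `k` squares of units in
`ZMod (2^α)` for `α > 2`. -/
theorem count_sum_sq_units_two_pow (α : ℕ) (hα : 2 < α) (k : ℕ) (hk : 0 < k)
    (c : ZMod (2 ^ α)) :
    Nat.card {x : Fin k → (ZMod (2 ^ α))ˣ // ∑ i, ((x i : ZMod (2 ^ α))) ^ 2 = c} =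
      if ZMod.castHom (show (8 : ℕ) ∣ 2 ^ α by
          calc (8 : ℕ) = 2 ^ 3 := by norm_num
            _ ∣ 2 ^ α := pow_dvd_pow 2 (by omega)) (ZMod 8) c = (k : ZMod 8)
      then 2 ^ (2 * k + (α - 3) * (k - 1)) else 0 := by
  obtain ⟨m, rfl⟩ : ∃ m, k = m + 1 := ⟨k - 1, by omega⟩
  let φ : ZMod (2 ^ α) →+ ZMod 8 := castHom (Nat.eight_dvd_two_pow hα) (ZMod 8)
  let sq (u : (ZMod (2 ^ α))ˣ) : φ ⁻¹' {1} :=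
    ⟨(u : ZMod (2 ^ α)) ^ 2, castHom_sq_of_isUnit (Nat.eight_dvd_two_pow hα) u.isUnit⟩
  have hsq (t : φ ⁻¹' {1}) : Nat.card {u // sq u = t} = 4 :=
    (Nat.card_congr (Equiv.subtypeEquivRight fun u => Subtype.ext_iff)).trans
      (card_units_sq_eq hα t.2)
  have hT : Nat.card (φ ⁻¹' {1}) = 2 ^ (α - 3) :=
    (card_castHom_fiber (Nat.eight_dvd_two_pow hα) 1).trans (Nat.two_pow_div_eight hα)
  have hφc : φ c = (m + 1) • 1 ↔ castHom (Nat.eight_dvd_two_pow hα) (ZMod 8) c = (m + 1 : ℕ) := by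
    rw [nsmul_one]
    rfl
  calc _ = 4 ^ (m + 1) *
        Nat.card {s : Fin (m + 1) → φ ⁻¹' {1} // ∑ i, (s i : ZMod (2 ^ α)) = c} :=
        (Nat.card_pi_subtype_comp_of_card_fiber sq hsq fun s : Fin (m + 1) → φ ⁻¹' {1} =>
          ∑ i, (s i : ZMod (2 ^ α)) = c).trans (by rw [Fintype.card_fin])
    _ = _ := by
      rw [AddMonoidHom.card_fiber_pi_sum_eq, hT]
      simp only [hφc]
      split_ifs
      · rw [Nat.add_sub_cancel, pow_add 2, pow_mul, pow_mul]
        norm_num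
      · simp
end
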